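/- arXiv:2412.11881 — 4 statements merged into one kernel-verified Lean document; each statement's English description precedes it below -/
import Mathlib

section
/- Let ν : [1,n] → [1,ñ] be a strictly increasing function with 1 < n < ñ. Extend ν to a function ν : ℤ → ℤ by ν(p) := k_n(p)·ñ + ν(r_n(p)), where p = k_n(p)·n + r_n(p) with r_n(p) ∈ [1,n]. Then the extended ν : ℤ → ℤ is strictly increasing. -/
/-- `r_n(p)`: the unique element of `[1,n]` with `p ≡ r_n(p) mod n`. -/
def rmod (n p : ℤ) : ℤ := (p - 1) % n + 1

/-- `k_n(p)`: the unique integer with `p = k_n(p)·n + r_n(p)`, `r_n(p) ∈ [1,n]`. -/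
def kdiv (n p : ℤ) : ℤ := (p - 1) / n

/-- The extension to `ℤ` of a function `ν : [1,n] → [1,ñ]`, given by
`ν(p) := k_n(p)·ñ + ν(r_n(p))`. -/
def extFun (n nt : ℤ) (ν : ℤ → ℤ) (p : ℤ) : ℤ := kdiv n p * nt + ν (rmod n p)

/-- The extension to `ℤ` of a strictly increasing function `ν : [1,n] → [1,ñ]`
(with `1 < n < ñ`) is strictly increasing. -/
theorem stmt3 (n nt : ℤ) (hn : 1 < n) (hnnt : n < nt) (ν : ℤ → ℤ)
    (hmap : ∀ i, 1 ≤ i → i ≤ n → 1 ≤ ν i ∧ ν i ≤ nt)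
    (hmono : ∀ i j, 1 ≤ i → i < j → j ≤ n → ν i < ν j) :
    StrictMono (extFun n nt ν) := by
  have hn0 : (0:ℤ) < n := by omega
  apply strictMono_int_of_lt_succ
  intro p
  have hr0 : 0 ≤ (p - 1) % n := Int.emod_nonneg _ (by omega)
  have hrn : (p - 1) % n < n := Int.emod_lt_of_pos _ hn0
  have heq : n * ((p - 1) / n) + (p - 1) % n = p - 1 := Int.mul_ediv_add_emod _ _
  by_cases hc : (p - 1) % n < n - 1
  · -- same block: (p)/n = (p-1)/n, p % n = (p-1)%n + 1
    have h := (Int.ediv_emod_unique (a := p) (b := n)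
      (r := (p - 1) % n + 1) (q := (p - 1) / n) hn0).mpr (by omega)
    simp only [extFun, kdiv, rmod, add_sub_cancel_right]
    rw [h.1, h.2]
    have := hmono ((p - 1) % n + 1) ((p - 1) % n + 1 + 1) (by omega) (by omega) (by omega)
    omega
  · -- last element: carry
    have hre : (p - 1) % n = n - 1 := by omega
    have hmul : n * ((p - 1) / n + 1) = n * ((p - 1) / n) + n := by ring
    have h := (Int.ediv_emod_unique (a := p) (b := n)
      (r := 0) (q := (p - 1) / n + 1) hn0).mpr ⟨by omega, le_rfl, hn0⟩
    simp only [extFun, kdiv, rmod, add_sub_cancel_right]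
    rw [h.1, h.2, hre]
    have h1 := hmap 1 le_rfl (by omega)
    have hnn := hmap n (by omega) le_rfl
    have : (n - 1 + 1 : ℤ) = n := by ring
    rw [this]
    have hx : ((p - 1) / n + 1) * nt = (p - 1) / n * nt + nt := by ring
    rw [hx, zero_add]
    omega
end

section
/- Let ξ : I_n → ℤ be the increasing height function ξ(i) = i + 2c. Then the inverse of the bijection φ_ξ : Î_n → R_n^+ × ℤ is given by φ_ξ^{−1}(α_{a,b}, 2k+1) = (b−a, ξ(b−a) + 2(kn + a)) and φ_ξ^{−1}(α_{a,b}, 2k+2) = (n+a−b, ξ(n+a−b) + 2(kn + b)), for 1 ≤ a < b ≤ n and k ∈ ℤ. -/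
/-!
Fix a row `i` of `Î_n` and write `f m = φ(i, ξ(i) + 2m)`. The Coxeter element `τ = s_1⋯s_{n−1}`
shifts `α_{a,b}` to `α_{a+1,b+1}` until `b = n`, where `τ(α_{a,n}) = -α_{1,a+1}`, so the second
coordinate goes up by one. Starting from `f 0 = (α_{i,n}, 0)`, the row therefore runs through
`α_{s,s+i}` (second coordinate `1`) for `1 ≤ s ≤ n - i`, then through `α_{s+i-n,s}` (second
coordinate `2`) for `n - i < s ≤ n`, and is back at `α_{i,n}` after `n` steps: `f` is
`n`-periodic up to adding `2` to the second coordinate. Reading off where `α_{a,b}` occurs gives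
the formula for `φ_ξ⁻¹`.
-/

/-- Recursion (2) along a row `f m = φ(i, ξ(i) + 2m)`, the root `α_{a,b}` being the pair `(a, b)`:
`τ_ξ(α_{a,b}) = α_{a+1,b+1}` for `b < n` and `τ_ξ(α_{a,n}) = -α_{1,a+1}`. -/
def RowForward (n : ℤ) (f : ℤ → (ℤ × ℤ) × ℤ) : Prop :=
  ∀ m a b k, 1 ≤ a → a < b → b ≤ n → f m = ((a, b), k) →
    f (m + 1) = if b < n then ((a + 1, b + 1), k) else ((1, a + 1), k + 1)

def RowBackward (n : ℤ) (f : ℤ → (ℤ × ℤ) × ℤ) : Prop :=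
  ∀ m a b k, 1 ≤ a → a < b → b ≤ n → f m = ((a, b), k) →
    f (m - 1) = if 1 < a then ((a - 1, b - 1), k) else ((b - 1, n), k - 1)

variable {n : ℤ} {f : ℤ → (ℤ × ℤ) × ℤ} {m a b k : ℤ}

namespace RowForward

theorem shift (hf : RowForward n f) (hm : f m = ((a, b), k)) (ha : 1 ≤ a) (hab : a < b)
    {t : ℤ} (ht : 0 ≤ t) (hbt : b + t ≤ n) : f (m + t) = ((a + t, b + t), k) := by
  induction t, ht using Int.leInduction with
  | base => simpa using hm
  | succ t ht ih =>
    have hstep := hf (m + t) (a + t) (b + t) k (by omega) (by omega) (by omega) (ih (by omega))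
    rw [if_pos (by omega)] at hstep
    rw [← add_assoc, hstep]
    simp only [add_assoc]

theorem wrap (hf : RowForward n f) (hm : f m = ((a, b), k)) (ha : 1 ≤ a) (hab : a < b)
    (hbn : b = n) : f (m + 1) = ((1, a + 1), k + 1) := by
  simpa [hbn] using hf m a b k ha hab hbn.le hm

theorem apply_add_of_le_sub (hf : RowForward n f) {i : ℤ} (hm : f m = ((i, n), k)) (hi : 1 ≤ i)
    (hin : i < n) {s : ℤ} (hs : 1 ≤ s) (hsi : s ≤ n - i) :
    f (m + s) = ((s, s + i), k + 1) := by
  have h := hf.shift (hf.wrap hm hi hin rfl) le_rfl (by omega) (t := s - 1) (by omega) (by omega)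
  rw [show m + s = m + 1 + (s - 1) by ring, h]
  simp only [Prod.mk.injEq, and_true]
  omega

theorem apply_add_of_sub_lt (hf : RowForward n f) {i : ℤ} (hm : f m = ((i, n), k)) (hi : 1 ≤ i)
    (hin : i < n) {s : ℤ} (hsi : n - i < s) (hs : s ≤ n) :
    f (m + s) = ((s + i - n, s), k + 2) := by
  have hmid := hf.apply_add_of_le_sub hm hi hin (s := n - i) (by omega) le_rfl
  have h := hf.shift (hf.wrap hmid (by omega) (by omega) (by omega)) le_rfl (by omega)
    (t := s - (n - i) - 1) (by omega) (by omega)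
  rw [show m + s = m + (n - i) + 1 + (s - (n - i) - 1) by ring, h]
  simp only [Prod.mk.injEq]
  omega

theorem apply_add_period (hf : RowForward n f) {i : ℤ} (hm : f m = ((i, n), k)) (hi : 1 ≤ i)
    (hin : i < n) : f (m + n) = ((i, n), k + 2) := by
  rw [hf.apply_add_of_sub_lt hm hi hin (by omega) le_rfl, add_sub_cancel_left]

end RowForward

namespace RowBackward

theorem shift (hf : RowBackward n f) (hm : f m = ((a, b), k)) (hab : a < b) (hbn : b ≤ n)
    {t : ℤ} (ht : 0 ≤ t) (hat : 1 ≤ a - t) : f (m - t) = ((a - t, b - t), k) := by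
  induction t, ht using Int.leInduction with
  | base => simpa using hm
  | succ t ht ih =>
    have hstep := hf (m - t) (a - t) (b - t) k (by omega) (by omega) (by omega) (ih (by omega))
    rw [if_pos (by omega)] at hstep
    rw [← sub_sub, hstep]
    simp only [sub_sub]

theorem wrap (hf : RowBackward n f) (hm : f m = ((a, b), k)) (ha : a = 1) (hab : a < b)
    (hbn : b ≤ n) : f (m - 1) = ((b - 1, n), k - 1) := by
  simpa [ha] using hf m a b k ha.ge hab hbn hm

theorem apply_sub_period (hf : RowBackward n f) {i : ℤ} (hm : f m = ((i, n), k)) (hi : 1 ≤ i)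
    (hin : i < n) : f (m - n) = ((i, n), k - 2) := by
  have h₁ := hf.shift hm hin le_rfl (t := i - 1) (by omega) (by omega)
  have h₂ := hf.wrap h₁ (by omega) (by omega) (by omega)
  have h₃ := hf.shift h₂ (by omega) le_rfl (t := n - i - 1) (by omega) (by omega)
  have h₄ := hf.wrap h₃ (by omega) (by omega) (by omega)
  rw [show m - n = m - (i - 1) - 1 - (n - i - 1) - 1 by ring, h₄]
  simp only [Prod.mk.injEq, and_true]
  omega

end RowBackward

theorem apply_mul_period (hf : RowForward n f) (hb : RowBackward n f) {i : ℤ} (hi : 1 ≤ i)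
    (hin : i < n) (h0 : f 0 = ((i, n), 0)) (q : ℤ) : f (q * n) = ((i, n), 2 * q) := by
  induction q using Int.induction_on with
  | zero => simpa using h0
  | succ q ih =>
    rw [add_mul, one_mul, hf.apply_add_period ih hi hin, mul_add_one]
  | pred q ih =>
    rw [sub_mul, one_mul, hb.apply_sub_period ih hi hin, mul_sub_one]

theorem stmt9_general (n c : ℤ) (ξ : ℤ → ℤ) (hξ : ∀ i, ξ i = i + 2 * c)
    (φ : ℤ × ℤ → (ℤ × ℤ) × ℤ)
    -- (1) the initial condition: for increasing ξ, `φ(i, ξ(i)) = (α_{i,n}, 0)`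
    (h1 : ∀ i, 1 ≤ i → i ≤ n - 1 → φ (i, ξ i) = ((i, n), 0))
    -- (2) the forward recursion via the Coxeter element `τ_ξ = s_1⋯s_{n−1}` (ε_i ↦ ε_{i+1}):
    (h2 : ∀ i p a b k, 1 ≤ i → i ≤ n - 1 → (2 : ℤ) ∣ (p - i) →
      1 ≤ a → a < b → b ≤ n → φ (i, p) = ((a, b), k) →
      φ (i, p + 2) = if b < n then ((a + 1, b + 1), k) else ((1, a + 1), k + 1))
    -- (2') the backward recursion via `τ_ξ^{-1}`:
    (h3 : ∀ i p a b k, 1 ≤ i → i ≤ n - 1 → (2 : ℤ) ∣ (p - i) →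
      1 ≤ a → a < b → b ≤ n → φ (i, p) = ((a, b), k) →
      φ (i, p - 2) = if 1 < a then ((a - 1, b - 1), k) else ((b - 1, n), k - 1)) :
    ∀ a b k : ℤ, 1 ≤ a → a < b → b ≤ n →
      φ (b - a, ξ (b - a) + 2 * (k * n + a)) = ((a, b), 2 * k + 1) ∧
      φ (n + a - b, ξ (n + a - b) + 2 * (k * n + b)) = ((a, b), 2 * k + 2) := by
  have hpar (i m : ℤ) : (2 : ℤ) ∣ ξ i + 2 * m - i := ⟨m + c, by rw [hξ]; ring⟩
  have fwd {i : ℤ} (hi : 1 ≤ i) (hin : i < n) : RowForward n (fun m ↦ φ (i, ξ i + 2 * m)) := by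
    intro m a b k ha hab hbn hm
    dsimp only
    rw [mul_add_one, ← add_assoc]
    exact h2 i _ a b k hi (by omega) (hpar i m) ha hab hbn hm
  have bwd {i : ℤ} (hi : 1 ≤ i) (hin : i < n) : RowBackward n (fun m ↦ φ (i, ξ i + 2 * m)) := by
    intro m a b k ha hab hbn hm
    dsimp only
    rw [mul_sub_one, ← add_sub_assoc]
    exact h3 i _ a b k hi (by omega) (hpar i m) ha hab hbn hm
  have period {i : ℤ} (hi : 1 ≤ i) (hin : i < n) (q : ℤ) :
      φ (i, ξ i + 2 * (q * n)) = ((i, n), 2 * q) :=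
    apply_mul_period (fwd hi hin) (bwd hi hin) hi hin (by simpa using h1 i hi (by omega)) q
  intro a b k ha hab hbn
  constructor
  · simpa using (fwd (i := b - a) (by omega) (by omega)).apply_add_of_le_sub
      (period (by omega) (by omega) k) (by omega) (by omega) (s := a) ha (by omega)
  · convert (fwd (i := n + a - b) (by omega) (by omega)).apply_add_of_sub_lt
      (period (by omega) (by omega) k) (by omega) (by omega) (s := b) (by omega) hbn using 3
    ring

/-- For the increasing height function `ξ(i) = i + 2c` on `I_n`, if
`φ : Î_n → R_n^+ × ℤ` satisfies the recursive characterization of the bijection `φ_ξ`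
(positive roots `α_{a,b}` being encoded as pairs `(a,b)` with `1 ≤ a < b ≤ n`), then its
inverse is given by `φ_ξ^{−1}(α_{a,b}, 2k+1) = (b−a, ξ(b−a) + 2(kn+a))` and
`φ_ξ^{−1}(α_{a,b}, 2k+2) = (n+a−b, ξ(n+a−b) + 2(kn+b))`. -/
theorem stmt9 (n c : ℤ) (hn : 1 < n) (ξ : ℤ → ℤ) (hξ : ∀ i, ξ i = i + 2 * c)
    (φ : ℤ × ℤ → (ℤ × ℤ) × ℤ)
    -- (1) the initial condition: for increasing ξ, `φ(i, ξ(i)) = (α_{i,n}, 0)`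
    (h1 : ∀ i, 1 ≤ i → i ≤ n - 1 → φ (i, ξ i) = ((i, n), 0))
    -- (2) the forward recursion via the Coxeter element `τ_ξ = s_1⋯s_{n−1}` (ε_i ↦ ε_{i+1}):
    (h2 : ∀ i p a b k, 1 ≤ i → i ≤ n - 1 → (2 : ℤ) ∣ (p - i) →
      1 ≤ a → a < b → b ≤ n → φ (i, p) = ((a, b), k) →
      φ (i, p + 2) = if b < n then ((a + 1, b + 1), k) else ((1, a + 1), k + 1))
    -- (2') the backward recursion via `τ_ξ^{-1}`:
    (h3 : ∀ i p a b k, 1 ≤ i → i ≤ n - 1 → (2 : ℤ) ∣ (p - i) →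
      1 ≤ a → a < b → b ≤ n → φ (i, p) = ((a, b), k) →
      φ (i, p - 2) = if 1 < a then ((a - 1, b - 1), k) else ((b - 1, n), k - 1)) :
    ∀ a b k : ℤ, 1 ≤ a → a < b → b ≤ n →
      φ (b - a, ξ (b - a) + 2 * (k * n + a)) = ((a, b), 2 * k + 1) ∧
      φ (n + a - b, ξ (n + a - b) + 2 * (k * n + b)) = ((a, b), 2 * k + 2) :=
  stmt9_general n c ξ hξ φ h1 h2 h3
end

section
/- Let ξ(i) = i + 2c be an increasing height function on I_n. Writing p = k_n(p)·n + r_n(p) with r_n(p) ∈ [1,n], the bijection φ_ξ satisfies, for any i ∈ I_n and p ∈ ℤ: φ_ξ(i, ξ(i)+2p) = (α_{r_n(p), r_n(p+i)}, 2k_n(p)+1) if r_n(p) < r_n(p+i), and φ_ξ(i, ξ(i)+2p) = (α_{r_n(p+i), r_n(p)}, 2k_n(p)+2) if r_n(p) > r_n(p+i). -/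
/-!
Along a row `i`, each step `p ↦ p + 1` of the recursion applies `τ_ξ : ε_j ↦ ε_{j+1}` to the
root: both indices of `α_{a,b}` move up by one, and when an index wraps from `n` to `1` the
root turns negative, so it is flipped and `k` increases. The pair `r_n(p), r_n(p+i)` moves in
exactly this way under `p ↦ p + 1`, with `k_n(p)` increasing when `r_n(p)` wraps and the
parity of the second component recording which index is the larger. The formula gives
`(α_{i,n}, 0)` at `p = 0`, and induction over `p ∈ ℤ` in both directions concludes.
-/

section Euclid

variable {n : ℤ}

lemma one_le_rmod (hn : 0 < n) (p : ℤ) : 1 ≤ rmod n p := by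
  have := Int.emod_nonneg (p - 1) hn.ne'
  unfold rmod; omega

lemma rmod_le (hn : 0 < n) (p : ℤ) : rmod n p ≤ n := by
  have := Int.emod_lt_of_pos (p - 1) hn
  unfold rmod; omega

lemma kdiv_rmod_eq {p k r : ℤ} (hn : 0 < n) (hp : p = k * n + r) (hr₁ : 1 ≤ r)
    (hr₂ : r ≤ n) : (kdiv n p, rmod n p) = (k, r) := by
  have := (Int.ediv_emod_unique (a := p - 1) (q := k) (r := r - 1) hn).2
    ⟨by rw [hp]; ring, by omega, by omega⟩
  unfold kdiv rmod
  rw [this.1, this.2, sub_add_cancel]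

lemma kdiv_mul_add_rmod (n p : ℤ) : kdiv n p * n + rmod n p = p := by
  have := Int.ediv_mul_add_emod (p - 1) n
  unfold kdiv rmod; omega

lemma kdiv_rmod_add_one (hn : 0 < n) (p : ℤ) :
    (kdiv n (p + 1), rmod n (p + 1)) =
      if rmod n p < n then (kdiv n p, rmod n p + 1) else (kdiv n p + 1, 1) := by
  have hp := kdiv_mul_add_rmod n p
  have := one_le_rmod hn p
  split_ifs with h
  · exact kdiv_rmod_eq hn (by omega) (by omega) (by omega)
  · have hr : rmod n p = n := by linarith [rmod_le hn p]
    exact kdiv_rmod_eq hn (by linear_combination -hp + hr) le_rfl hn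

lemma kdiv_rmod_sub_one (hn : 0 < n) (p : ℤ) :
    (kdiv n (p - 1), rmod n (p - 1)) =
      if 1 < rmod n p then (kdiv n p, rmod n p - 1) else (kdiv n p - 1, n) := by
  have hp := kdiv_mul_add_rmod n p
  have := rmod_le hn p
  split_ifs with h
  · exact kdiv_rmod_eq hn (by omega) (by omega) (by omega)
  · have hr : rmod n p = 1 := by linarith [one_le_rmod hn p]
    exact kdiv_rmod_eq hn (by linear_combination -hp + hr) hn le_rfl

lemma rmod_add_ne {i : ℤ} (p : ℤ) (hi₀ : 0 < i) (hin : i < n) : rmod n (p + i) ≠ rmod n p := by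
  intro h
  have hmod : p - 1 ≡ p + i - 1 [ZMOD n] := by unfold rmod at h; exact (add_right_cancel h).symm
  have := Int.eq_zero_of_dvd_of_nonneg_of_lt hi₀.le hin (by simpa using hmod.dvd)
  omega

end Euclid

def IsPosRoot (n : ℤ) (ab : ℤ × ℤ) : Prop := 1 ≤ ab.1 ∧ ab.1 < ab.2 ∧ ab.2 ≤ n

/-- The action of `τ_ξ` on `R_n^+ × ℤ`, with `(α_{a,b}, k)` encoded as `((a, b), k)`. -/
def coxeterShift (n : ℤ) (x : (ℤ × ℤ) × ℤ) : (ℤ × ℤ) × ℤ :=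
  if x.1.2 < n then ((x.1.1 + 1, x.1.2 + 1), x.2) else ((1, x.1.1 + 1), x.2 + 1)

def coxeterShiftInv (n : ℤ) (x : (ℤ × ℤ) × ℤ) : (ℤ × ℤ) × ℤ :=
  if 1 < x.1.1 then ((x.1.1 - 1, x.1.2 - 1), x.2) else ((x.1.2 - 1, n), x.2 - 1)

def phiFormula (n i p : ℤ) : (ℤ × ℤ) × ℤ :=
  if rmod n p < rmod n (p + i) then ((rmod n p, rmod n (p + i)), 2 * kdiv n p + 1)
  else ((rmod n (p + i), rmod n p), 2 * kdiv n p + 2)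

section PhiFormula

variable {n i : ℤ}

lemma phiFormula_zero (hi₀ : 0 < i) (hin : i < n) : phiFormula n i 0 = ((i, n), 0) := by
  have h₀ := kdiv_rmod_eq (p := 0) (k := -1) (r := n) (by omega) (by ring) (by omega) le_rfl
  have hi := kdiv_rmod_eq (p := 0 + i) (k := 0) (r := i) (by omega) (by ring) hi₀ hin.le
  simp only [Prod.mk.injEq] at h₀ hi
  simp only [phiFormula, h₀, hi, if_neg (not_lt.2 hin.le)]
  norm_num

lemma phiFormula_isPosRoot (hi₀ : 0 < i) (hin : i < n) (p : ℤ) : IsPosRoot n (phiFormula n i p).1 := by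
  have hn : 0 < n := hi₀.trans hin
  have := one_le_rmod hn p; have := one_le_rmod hn (p + i)
  have := rmod_le hn p; have := rmod_le hn (p + i)
  have := rmod_add_ne p hi₀ hin
  unfold IsPosRoot phiFormula; split_ifs <;> dsimp only <;> omega

lemma coxeterShift_phiFormula (hi₀ : 0 < i) (hin : i < n) (p : ℤ) :
    coxeterShift n (phiFormula n i p) = phiFormula n i (p + 1) := by
  have hn : 0 < n := hi₀.trans hin
  have hp := kdiv_rmod_add_one hn p
  have hpi := kdiv_rmod_add_one hn (p + i)
  have := one_le_rmod hn p; have := one_le_rmod hn (p + i)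
  have := rmod_le hn p; have := rmod_le hn (p + i)
  have := rmod_add_ne p hi₀ hin
  unfold coxeterShift phiFormula
  rw [add_right_comm p 1 i]
  split_ifs at hp hpi ⊢ <;> simp only [Prod.mk.injEq] at hp hpi ⊢ <;> omega

lemma coxeterShiftInv_phiFormula (hi₀ : 0 < i) (hin : i < n) (p : ℤ) :
    coxeterShiftInv n (phiFormula n i p) = phiFormula n i (p - 1) := by
  have hn : 0 < n := hi₀.trans hin
  have hp := kdiv_rmod_sub_one hn p
  have hpi := kdiv_rmod_sub_one hn (p + i)
  have := one_le_rmod hn p; have := one_le_rmod hn (p + i)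
  have := rmod_le hn p; have := rmod_le hn (p + i)
  have := rmod_add_ne p hi₀ hin
  unfold coxeterShiftInv phiFormula
  rw [sub_add_eq_add_sub p 1 i]
  split_ifs at hp hpi ⊢ <;> simp only [Prod.mk.injEq] at hp hpi ⊢ <;> omega

lemma eq_phiFormula_of_shift (hi₀ : 0 < i) (hin : i < n) (f : ℤ → (ℤ × ℤ) × ℤ) (h₀ : f 0 = ((i, n), 0))
    (hsucc : ∀ q x, IsPosRoot n x.1 → f q = x → f (q + 1) = coxeterShift n x)
    (hpred : ∀ q x, IsPosRoot n x.1 → f q = x → f (q - 1) = coxeterShiftInv n x) (p : ℤ) :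
    f p = phiFormula n i p := by
  induction p using Int.induction_on with
  | zero => rw [h₀, phiFormula_zero hi₀ hin]
  | succ q ih =>
    rw [hsucc q _ (phiFormula_isPosRoot hi₀ hin q) ih, coxeterShift_phiFormula hi₀ hin]
  | pred q ih =>
    rw [hpred _ _ (phiFormula_isPosRoot hi₀ hin _) ih, coxeterShiftInv_phiFormula hi₀ hin]

end PhiFormula

theorem stmt10_general (n c : ℤ) (ξ : ℤ → ℤ) (hξ : ∀ i, ξ i = i + 2 * c)
    (φ : ℤ × ℤ → (ℤ × ℤ) × ℤ)
    (h1 : ∀ i, 1 ≤ i → i ≤ n - 1 → φ (i, ξ i) = ((i, n), 0))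
    (h2 : ∀ i p a b k, 1 ≤ i → i ≤ n - 1 → (2 : ℤ) ∣ (p - i) →
      1 ≤ a → a < b → b ≤ n → φ (i, p) = ((a, b), k) →
      φ (i, p + 2) = if b < n then ((a + 1, b + 1), k) else ((1, a + 1), k + 1))
    (h3 : ∀ i p a b k, 1 ≤ i → i ≤ n - 1 → (2 : ℤ) ∣ (p - i) →
      1 ≤ a → a < b → b ≤ n → φ (i, p) = ((a, b), k) →
      φ (i, p - 2) = if 1 < a then ((a - 1, b - 1), k) else ((b - 1, n), k - 1)) :
    ∀ i p : ℤ, 1 ≤ i → i ≤ n - 1 →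
      (rmod n p < rmod n (p + i) →
        φ (i, ξ i + 2 * p) = ((rmod n p, rmod n (p + i)), 2 * kdiv n p + 1)) ∧
      (rmod n (p + i) < rmod n p →
        φ (i, ξ i + 2 * p) = ((rmod n (p + i), rmod n p), 2 * kdiv n p + 2)) := by
  intro i p hi₁ hi₂
  have hpar (q : ℤ) : (2 : ℤ) ∣ ξ i + 2 * q - i := ⟨c + q, by rw [hξ]; ring⟩
  have hφ : φ (i, ξ i + 2 * p) = phiFormula n i p := by
    refine eq_phiFormula_of_shift (f := fun q ↦ φ (i, ξ i + 2 * q)) (by omega) (by omega)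
      (by simpa using h1 i hi₁ hi₂) (fun q ⟨⟨a, b⟩, k⟩ ⟨ha, hab, hb⟩ hq ↦ ?_)
      (fun q ⟨⟨a, b⟩, k⟩ ⟨ha, hab, hb⟩ hq ↦ ?_) p
    · rw [show ξ i + 2 * (q + 1) = ξ i + 2 * q + 2 by ring]
      exact h2 i _ a b k hi₁ hi₂ (hpar q) ha hab hb hq
    · rw [show ξ i + 2 * (q - 1) = ξ i + 2 * q - 2 by ring]
      exact h3 i _ a b k hi₁ hi₂ (hpar q) ha hab hb hq
  rw [hφ, phiFormula]
  exact ⟨fun h ↦ if_pos h, fun h ↦ if_neg (not_lt.2 h.le)⟩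

/-- For the increasing height function `ξ(i) = i + 2c` on `I_n`, if `φ : Î_n → R_n^+ × ℤ`
satisfies the recursive characterization of the bijection `φ_ξ` (positive roots `α_{a,b}`
encoded as pairs `(a,b)`), then for any `i ∈ I_n` and `p ∈ ℤ`:
`φ_ξ(i, ξ(i)+2p) = (α_{r_n(p), r_n(p+i)}, 2k_n(p)+1)` if `r_n(p) < r_n(p+i)`, and
`φ_ξ(i, ξ(i)+2p) = (α_{r_n(p+i), r_n(p)}, 2k_n(p)+2)` if `r_n(p) > r_n(p+i)`. -/
theorem stmt10 (n c : ℤ) (hn : 1 < n) (ξ : ℤ → ℤ) (hξ : ∀ i, ξ i = i + 2 * c)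
    (φ : ℤ × ℤ → (ℤ × ℤ) × ℤ)
    (h1 : ∀ i, 1 ≤ i → i ≤ n - 1 → φ (i, ξ i) = ((i, n), 0))
    (h2 : ∀ i p a b k, 1 ≤ i → i ≤ n - 1 → (2 : ℤ) ∣ (p - i) →
      1 ≤ a → a < b → b ≤ n → φ (i, p) = ((a, b), k) →
      φ (i, p + 2) = if b < n then ((a + 1, b + 1), k) else ((1, a + 1), k + 1))
    (h3 : ∀ i p a b k, 1 ≤ i → i ≤ n - 1 → (2 : ℤ) ∣ (p - i) →
      1 ≤ a → a < b → b ≤ n → φ (i, p) = ((a, b), k) →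
      φ (i, p - 2) = if 1 < a then ((a - 1, b - 1), k) else ((b - 1, n), k - 1)) :
    ∀ i p : ℤ, 1 ≤ i → i ≤ n - 1 →
      (rmod n p < rmod n (p + i) →
        φ (i, ξ i + 2 * p) = ((rmod n p, rmod n (p + i)), 2 * kdiv n p + 1)) ∧
      (rmod n (p + i) < rmod n p →
        φ (i, ξ i + 2 * p) = ((rmod n (p + i), rmod n p), 2 * kdiv n p + 2)) :=
  stmt10_general n c ξ hξ φ h1 h2 h3
end

section
/- Let A_n (n ≥ 2) be the Q(t^{1/2})-algebra generated by e_{i,k} for i ∈ [1,n−1], k ∈ ℤ, subject to relations (R1): for fixed k, the e_{i,k} satisfy quantum Serre relations (e_{i,k}² e_{j,k} − (t+t^{−1}) e_{i,k} e_{j,k} e_{i,k} + e_{j,k} e_{i,k}² = 0 if |i−j|=1; commuting if |i−j|>1), and (R2): for k < k', e_{i,k} e_{j,k'} = t^{(−1)^{k+k'} c_{i,j}} e_{j,k'} e_{i,k} + (1−t^{−2}) δ_{(i,k),(j,k'−1)}, where c_{i,j} = 2δ_{i,j} − δ_{|i−j|,1}. Then in A_3, the elements ẽ_k := (t−t^{−1})^{−1}[e_{1,k},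 e_{2,k}]_{t^{1/2}} (k ∈ ℤ) satisfy: for k < k', ẽ_k ẽ_{k'} = t^{2(−1)^{k+k'}} ẽ_{k'} ẽ_k + (1−t^{−2}) δ_{k, k'−1}. -/
noncomputable section

/-- The field `ℚ(t^{1/2})`. -/
abbrev K : Type := RatFunc ℚ

/-- The element `t^{1/2}`. -/
def sqt : K := RatFunc.X

/-- The element `t = (t^{1/2})^2`. -/
def tv : K := sqt ^ 2

/-- The `t`-commutator `[x,y]_{t^{1/2}} = t^{1/2} x y − t^{−1/2} y x` in a `K`-algebra. -/
def tcK {A : Type*} [Ring A] [Algebra K A] (x y : A) : A :=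
  sqt • (x * y) - sqt⁻¹ • (y * x)

/-- The Cartan integers of type `A`: `c_{i,i} = 2`, `c_{i,j} = −1` if `|i−j| = 1`, else `0`. -/
def cartanA (i j : ℤ) : ℤ := if i = j then 2 else if |i - j| = 1 then -1 else 0

lemma sqt_ne : sqt ≠ 0 := RatFunc.X_ne_zero

lemma tv_ne : tv ≠ 0 := pow_ne_zero _ sqt_ne

lemma tvsq_ne_one : tv ^ 2 ≠ 1 := by
  intro h
  have h2 : (algebraMap (Polynomial ℚ) K) (Polynomial.X ^ 4) = algebraMap (Polynomial ℚ) K 1 := by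
    rw [map_pow, map_one]
    rw [show ((algebraMap (Polynomial ℚ) K) Polynomial.X) = sqt from rfl]
    rw [show sqt ^ 4 = tv ^ 2 by rw [tv]; ring]
    exact h
  have h3 := RatFunc.algebraMap_injective ℚ h2
  have := congrArg Polynomial.natDegree h3
  simp [Polynomial.natDegree_X_pow] at this

lemma tvsub_ne : tv - tv⁻¹ ≠ 0 := by
  intro h
  apply tvsq_ne_one
  have h1 : tv = tv⁻¹ := by linear_combination h
  have h2 : tv * tv = tv * tv⁻¹ := by rw [← h1]
  rw [mul_inv_cancel₀ tv_ne] at h2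
  linear_combination h2

section abstractF
variable {F : Type} [Field F] {A : Type*} [Ring A] [Algebra F A]

/-- generic t-commutator with independent "inverse" atoms -/
def tc2 (s si : F) (x y : A) : A := s • (x * y) - si • (y * x)

set_option maxHeartbeats 1000000 in
lemma key' (a b c d : A) (s si q qi δ : F) (hss : s * si = 1) (hqq : q * qi = 1)
    (hac : a * c = (q * q) • (c * a) + δ • (1 : A))
    (hbd : b * d = (q * q) • (d * b) + δ • (1 : A))
    (had : a * d = qi • (d * a))
    (hbc : b * c = qi • (c * b)) :
    tc2 s si a b * tc2 s si c d = (q * q) • (tc2 s si c d * tc2 s si a b)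
      + (δ * (q * (s * s + si * si) - q * q - 1)) • (c * a)
      + (δ * (q * (s * s + si * si) - q * q - 1)) • (d * b)
      + (δ * δ * (qi * (s * s + si * si) - 2)) • (1 : A) := by
  have hac' : ∀ x : A, a * (c * x) = (q * q) • (c * (a * x)) + δ • x := by
    intro x
    rw [← mul_assoc, hac, add_mul, smul_mul_assoc, smul_mul_assoc, one_mul, mul_assoc]
  have hbd' : ∀ x : A, b * (d * x) = (q * q) • (d * (b * x)) + δ • x := by
    intro x
    rw [← mul_assoc, hbd, add_mul, smul_mul_assoc, smul_mul_assoc, one_mul, mul_assoc]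
  have had' : ∀ x : A, a * (d * x) = qi • (d * (a * x)) := by
    intro x
    rw [← mul_assoc, had, smul_mul_assoc, mul_assoc]
  have hbc' : ∀ x : A, b * (c * x) = qi • (c * (b * x)) := by
    intro x
    rw [← mul_assoc, hbc, smul_mul_assoc, mul_assoc]
  simp only [tc2, sub_mul, mul_sub, smul_mul_assoc, mul_smul_comm, smul_smul, smul_sub,
    smul_add, add_mul, mul_add, mul_assoc]
  simp only [hac', hbd', had', hbc', hac, hbd, had, hbc, smul_add, smul_smul, mul_smul_comm,
    mul_add, mul_one]
  match_scalars
  · linear_combination (s^2*q^2 + s^2*q^3*qi) * hqq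
  · linear_combination (-(q^2*δ) - q^2*qi^2*δ) * hss + (-δ - q*qi*δ + si^2*q*δ + s^2*q*δ) * hqq
  · linear_combination (-(q^2*δ) - q^2*qi^2*δ) * hss + (-δ - q*qi*δ + si^2*q*δ + s^2*q*δ) * hqq
  · linear_combination (-2*δ^2) * hss
  · linear_combination (q^2 - q^4*qi^2) * hss + (-(q^2) - q^3*qi) * hqq
  · linear_combination (q^2 - q^4*qi^2) * hss + (-(q^2) - q^3*qi) * hqq
  · linear_combination (si^2*q^2 + si^2*q^3*qi) * hqq

lemma case2' (a b c d : A) (s si q qi r : F) (hss : s * si = 1) (hqq : q * qi = 1)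
    (hac : a * c = (q * q) • (c * a))
    (hbd : b * d = (q * q) • (d * b))
    (had : a * d = qi • (d * a))
    (hbc : b * c = qi • (c * b)) :
    (r • tc2 s si a b) * (r • tc2 s si c d)
      = (q * q) • ((r • tc2 s si c d) * (r • tc2 s si a b)) := by
  have h := key' a b c d s si q qi 0 hss hqq (by rw [hac]; simp) (by rw [hbd]; simp) had hbc
  simp only [zero_smul, zero_mul, mul_zero, add_zero, smul_zero] at h
  rw [smul_mul_smul_comm, smul_mul_smul_comm, h, smul_comm]

lemma case1' (a b c d : A) (s si r : F) (hss : s * si = 1)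
    (hrk : (r * r) * ((1 - si * si * (si * si)) * ((s * s - si * si) * (s * s - si * si)))
      = 1 - si * si * (si * si))
    (hac : a * c = (si * si * (si * si)) • (c * a)
      + ((1 : F) - si * si * (si * si)) • (1 : A))
    (hbd : b * d = (si * si * (si * si)) • (d * b)
      + ((1 : F) - si * si * (si * si)) • (1 : A))
    (had : a * d = (s * s) • (d * a))
    (hbc : b * c = (s * s) • (c * b)) :
    (r • tc2 s si a b) * (r • tc2 s si c d)
      = (si * si * (si * si)) • ((r • tc2 s si c d) * (r • tc2 s si a b))
        + ((1 : F) - si * si * (si * si)) • (1 : A) := by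
  have hqq : (si * si) * (s * s) = 1 := by linear_combination (si * s + 1) * hss
  have h := key' a b c d s si (si * si) (s * s) ((1 : F) - si * si * (si * si)) hss hqq
    hac hbd had hbc
  rw [smul_mul_smul_comm, smul_mul_smul_comm, h]
  simp only [smul_add, smul_smul]
  match_scalars
  · ring
  · linear_combination (r*r*(1 - si^4 + s*si - s*si^5)) * hss
  · linear_combination (r*r*(1 - si^4 + s*si - s*si^5)) * hss
  · linear_combination
      (r*r*(1 - si*si*(si*si))*(2 - si^4 + 2*s*si - s*si^5 - s^2*si^2 - s^3*si^3)) * hss + hrk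

end abstractF

/-- In the bosonic extension `A_3` (any algebra with generators `e_{i,k}`, `i ∈ [1,2]`,
`k ∈ ℤ`, satisfying the relations (R1) and (R2)), the elements
`ẽ_k := (t−t⁻¹)^{−1}[e_{1,k}, e_{2,k}]_{t^{1/2}}` satisfy, for `k < k'`,
`ẽ_k ẽ_{k'} = t^{2(−1)^{k+k'}} ẽ_{k'} ẽ_k + (1−t^{−2}) δ_{k,k'−1}`. -/
theorem stmt12 {A : Type*} [Ring A] [Algebra K A] (e : ℤ → ℤ → A)
    (hR1serre : ∀ (k i j : ℤ), 1 ≤ i → i ≤ 2 → 1 ≤ j → j ≤ 2 → |i - j| = 1 →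
      e i k ^ 2 * e j k - (tv + tv⁻¹) • (e i k * e j k * e i k) + e j k * e i k ^ 2 = 0)
    (hR1comm : ∀ (k i j : ℤ), 1 ≤ i → i ≤ 2 → 1 ≤ j → j ≤ 2 → 1 < |i - j| →
      e i k * e j k = e j k * e i k)
    (hR2 : ∀ (i j k k' : ℤ), 1 ≤ i → i ≤ 2 → 1 ≤ j → j ≤ 2 → k < k' →
      e i k * e j k' =
        (tv ^ (if Even (k + k') then cartanA i j else -cartanA i j)) • (e j k' * e i k) +
        (if i = j ∧ k' = k + 1 then ((1 : K) - tv⁻¹ ^ 2) • (1 : A) else 0)) :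
    ∀ k k' : ℤ, k < k' →
      (((tv - tv⁻¹)⁻¹ : K) • tcK (e 1 k) (e 2 k)) *
          (((tv - tv⁻¹)⁻¹ : K) • tcK (e 1 k') (e 2 k')) =
        (tv ^ (if Even (k + k') then (2 : ℤ) else -2)) •
            ((((tv - tv⁻¹)⁻¹ : K) • tcK (e 1 k') (e 2 k')) *
              (((tv - tv⁻¹)⁻¹ : K) • tcK (e 1 k) (e 2 k))) +
          (if k' = k + 1 then ((1 : K) - tv⁻¹ ^ 2) • (1 : A) else 0) := by
  intro k k' hkk
  have hss : sqt * sqt⁻¹ = 1 := mul_inv_cancel₀ sqt_ne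
  have hts : tv = sqt * sqt := by rw [tv, pow_two]
  have hti : tv⁻¹ = sqt⁻¹ * sqt⁻¹ := by rw [hts, mul_inv]
  have h2 : tv ^ (2 : ℤ) = tv * tv := by
    rw [show (2 : ℤ) = ((2 : ℕ) : ℤ) from rfl, zpow_natCast, pow_two]
  have hm2 : tv ^ (-2 : ℤ) = tv⁻¹ * tv⁻¹ := by
    rw [show (-2 : ℤ) = -((2 : ℕ) : ℤ) from rfl, zpow_neg, zpow_natCast, pow_two, mul_inv]
  have h1' : tv ^ (1 : ℤ) = tv := zpow_one tv
  have hm1 : tv ^ (-1 : ℤ) = tv⁻¹ := zpow_neg_one tv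
  have c11 : cartanA 1 1 = 2 := by norm_num [cartanA]
  have c22 : cartanA 2 2 = 2 := by norm_num [cartanA]
  have c12 : cartanA 1 2 = -1 := by norm_num [cartanA]
  have c21 : cartanA 2 1 = -1 := by norm_num [cartanA]
  have h11 := hR2 1 1 k k' (by norm_num) (by norm_num) (by norm_num) (by norm_num) hkk
  have h22 := hR2 2 2 k k' (by norm_num) (by norm_num) (by norm_num) (by norm_num) hkk
  have h12 := hR2 1 2 k k' (by norm_num) (by norm_num) (by norm_num) (by norm_num) hkk
  have h21 := hR2 2 1 k k' (by norm_num) (by norm_num) (by norm_num) (by norm_num) hkk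
  rw [c11] at h11
  rw [c22] at h22
  rw [c12] at h12
  rw [c21] at h21
  rw [if_neg (show ¬((1 : ℤ) = 2 ∧ k' = k + 1) by norm_num), add_zero] at h12
  rw [if_neg (show ¬((2 : ℤ) = 1 ∧ k' = k + 1) by norm_num), add_zero] at h21
  have htceq : ∀ x y : A, tcK x y = tc2 sqt sqt⁻¹ x y := fun _ _ => rfl
  by_cases hk1 : k' = k + 1
  · -- k' = k + 1 : odd parity, delta term present
    have hodd : ¬ Even (k + k') := by
      rw [hk1, show k + (k + 1) = 2 * k + 1 by ring, Int.even_add_one]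
      simp [even_two_mul]
    rw [if_neg hodd] at h11 h22 h12 h21
    rw [if_neg hodd, if_pos hk1]
    rw [if_pos (show (1 : ℤ) = 1 ∧ k' = k + 1 from ⟨rfl, hk1⟩)] at h11
    rw [if_pos (show (2 : ℤ) = 2 ∧ k' = k + 1 from ⟨rfl, hk1⟩)] at h22
    rw [hm2, hti, pow_two] at h11 h22
    rw [show -(-1 : ℤ) = 1 from rfl, h1', hts] at h12 h21
    rw [hm2, hti, hts, pow_two]
    simp only [htceq]
    exact case1' (e 1 k) (e 2 k) (e 1 k') (e 2 k') sqt sqt⁻¹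
      ((sqt * sqt - sqt⁻¹ * sqt⁻¹)⁻¹) hss
      (by
        rw [← hts, ← hti]
        have hc : (tv - tv⁻¹)⁻¹ * (tv - tv⁻¹) = 1 := inv_mul_cancel₀ tvsub_ne
        linear_combination
          ((1 - tv⁻¹ * tv⁻¹) * ((tv - tv⁻¹)⁻¹ * (tv - tv⁻¹) + 1)) * hc)
      h11 h22 h12 h21
  · -- k' > k + 1 : no delta term
    rw [if_neg hk1]
    rw [if_neg (show ¬((1 : ℤ) = 1 ∧ k' = k + 1) by simp [hk1]), add_zero] at h11
    rw [if_neg (show ¬((2 : ℤ) = 2 ∧ k' = k + 1) by simp [hk1]), add_zero] at h22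
    simp only [htceq]
    by_cases hev : Even (k + k')
    · rw [if_pos hev] at h11 h22 h12 h21 ⊢
      rw [h2] at h11 h22 ⊢
      rw [hm1] at h12 h21
      rw [add_zero]
      exact case2' (e 1 k) (e 2 k) (e 1 k') (e 2 k') sqt sqt⁻¹ tv tv⁻¹ ((tv - tv⁻¹)⁻¹)
        hss (mul_inv_cancel₀ tv_ne) h11 h22 h12 h21
    · rw [if_neg hev] at h11 h22 h12 h21 ⊢
      rw [hm2] at h11 h22 ⊢
      rw [show -(-1 : ℤ) = 1 from rfl, h1'] at h12 h21
      rw [add_zero]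
      exact case2' (e 1 k) (e 2 k) (e 1 k') (e 2 k') sqt sqt⁻¹ tv⁻¹ tv ((tv - tv⁻¹)⁻¹)
        hss (inv_mul_cancel₀ tv_ne) h11 h22 h12 h21
end
end
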